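/- arXiv:math/0009193 — 5 statements merged into one kernel-verified Lean document; each statement's English description precedes it below -/
import Mathlib

section
/- Let h ∈ SU(2), viewed as a 2×2 complex matrix, and let τ ∈ ℝ be the (real) trace of h, with τ² < 4 (equivalently h ≠ 1 and h ≠ −1). Then the matrix exponential satisfies exp( (2π / √(4 − τ²)) • (h − h⁻¹) ) = 1 (the identity matrix). Consequently the curve t ↦ exp(t (h − h⁻¹)) is periodic with period 2π / √(4 − τ²). -/
/-!
For `h ∈ SU(2)` the inverse `h⁻¹ = h*` is the adjugate `τ - h`, so `A = h - h⁻¹ = 2h - τ` satisfies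
`A² = (τ² - 4)·1 = -ω²·1` with `ω = √(4 - τ²)`. Hence `J = A/ω` squares to `-1`, and the
ℝ-algebra map `ℂ → M₂(ℂ)`, `I ↦ J`, sends `exp (2πI) = 1` to `exp ((2π/ω)·A) = 1`.
-/

open Matrix

/-- `SU2` is the special unitary group of 2×2 complex matrices,
identified with the 3-sphere `S³`. -/
abbrev SU2 : Submonoid (Matrix (Fin 2) (Fin 2) ℂ) := Matrix.specialUnitaryGroup (Fin 2) ℂ

noncomputable instance : Group SU2 :=
  { (inferInstance : Monoid SU2) with
    inv := fun A => ⟨star A.1, by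
      obtain ⟨hu, hd⟩ := Matrix.mem_specialUnitaryGroup_iff.mp A.2
      refine Matrix.mem_specialUnitaryGroup_iff.mpr ⟨Unitary.star_mem hu, ?_⟩
      rw [Matrix.star_eq_conjTranspose, Matrix.det_conjTranspose, hd, star_one]⟩
    inv_mul_cancel := fun A => Subtype.ext A.2.1.1 }

open NormedSpace Real

section BanachAlgebra

variable {𝔸 : Type*} [NormedRing 𝔸] [NormedAlgebra ℝ 𝔸]

theorem exp_two_pi_smul_eq_one_of_mul_self_eq_neg_one {J : 𝔸} (hJ : J * J = -1) :
    exp ((2 * π) • J) = 1 := by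
  let φ := Complex.liftAux J hJ
  have hφ : Continuous φ := φ.toLinearMap.continuous_of_finiteDimensional
  let : Algebra ℚ 𝔸 := .restrictScalars ℚ ℝ 𝔸
  calc exp ((2 * π) • J) = φ (exp (2 * π * Complex.I)) := by
        rw [map_exp φ hφ, Complex.liftAux_apply]; simp
    _ = 1 := by rw [← Complex.exp_eq_exp_ℂ, Complex.exp_two_pi_mul_I, map_one]

theorem exp_two_pi_div_smul_eq_one_of_mul_self_eq {A : 𝔸} {ω : ℝ} (hA : A * A = -(ω ^ 2) • 1) :
    exp ((2 * π / ω) • A) = 1 := by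
  rcases eq_or_ne ω 0 with rfl | hω
  · simp
  have hJ : (ω⁻¹ • A) * (ω⁻¹ • A) = -1 := by
    rw [smul_mul_smul_comm, hA, smul_smul, show ω⁻¹ * ω⁻¹ * -ω ^ 2 = -1 by field_simp,
      neg_one_smul]
  simpa [div_eq_mul_inv, mul_smul] using exp_two_pi_smul_eq_one_of_mul_self_eq_neg_one hJ

variable [CompleteSpace 𝔸]

theorem periodic_exp_smul_of_exp_smul_eq_one {A : 𝔸} {T : ℝ} (hT : exp (T • A) = 1) :
    Function.Periodic (fun t : ℝ => exp (t • A)) T := fun t => by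
  let : NormedAlgebra ℚ 𝔸 := .restrictScalars ℚ ℝ 𝔸
  simp only [add_smul, exp_add_of_commute (((Commute.refl A).smul_left t).smul_right T), hT,
    mul_one]

end BanachAlgebra

theorem Matrix.star_eq_adjugate_of_mem_specialUnitaryGroup {n α : Type*} [Fintype n]
    [DecidableEq n] [CommRing α] [StarRing α] {M : Matrix n n α}
    (hM : M ∈ specialUnitaryGroup n α) : star M = M.adjugate := by
  obtain ⟨hu, hdet⟩ := mem_specialUnitaryGroup_iff.mp hM
  rw [← inv_eq_left_inv (Unitary.star_mul_self_of_mem hu), inv_def, hdet, Ring.inverse_one,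
    one_smul]

theorem Matrix.sub_adjugate_mul_self_fin_two {R : Type*} [CommRing R]
    (M : Matrix (Fin 2) (Fin 2) R) :
    (M - M.adjugate) * (M - M.adjugate) = (M.trace ^ 2 - 4 * M.det) • 1 := by
  rw [eta_fin_two M, adjugate_fin_two]
  ext i j
  fin_cases i <;> fin_cases j <;> simp [trace_fin_two, det_fin_two] <;> ring

/-- For `h ∈ SU(2)` with real trace `τ`, `τ² < 4`, the curve `t ↦ exp(t(h − h⁻¹))` is
periodic with period `2π/√(4 − τ²)`. -/
theorem exp_sub_inv_periodic (h : SU2) (τ : ℝ)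
    (htr : ((h : Matrix (Fin 2) (Fin 2) ℂ)).trace = (τ : ℂ)) (hτ : τ ^ 2 < 4) :
    NormedSpace.exp ((2 * Real.pi / Real.sqrt (4 - τ ^ 2)) •
        ((h : Matrix (Fin 2) (Fin 2) ℂ) - ((h⁻¹ : SU2) : Matrix (Fin 2) (Fin 2) ℂ)))
      = 1 ∧
    (∀ t : ℝ,
      NormedSpace.exp ((t + 2 * Real.pi / Real.sqrt (4 - τ ^ 2)) •
          ((h : Matrix (Fin 2) (Fin 2) ℂ) - ((h⁻¹ : SU2) : Matrix (Fin 2) (Fin 2) ℂ)))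
        = NormedSpace.exp (t •
            ((h : Matrix (Fin 2) (Fin 2) ℂ) - ((h⁻¹ : SU2) : Matrix (Fin 2) (Fin 2) ℂ)))) := by
  set M : Matrix (Fin 2) (Fin 2) ℂ := (h : Matrix (Fin 2) (Fin 2) ℂ)
  have hinv : ((h⁻¹ : SU2) : Matrix (Fin 2) (Fin 2) ℂ) = M.adjugate :=
    star_eq_adjugate_of_mem_specialUnitaryGroup h.2
  have hsq : (M - M.adjugate) * (M - M.adjugate) = -(√(4 - τ ^ 2) ^ 2) • 1 := by
    rw [sub_adjugate_mul_self_fin_two, htr, (mem_specialUnitaryGroup_iff.mp h.2).2,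
      sq_sqrt (by linarith), ← Complex.coe_smul]
    push_cast
    ring_nf
  -- any norm would do: it only serves to make matrices a Banach algebra
  open scoped Matrix.Norms.Operator in
  have hT := exp_two_pi_div_smul_eq_one_of_mul_self_eq hsq
  rw [hinv]
  open scoped Matrix.Norms.Operator in
  exact ⟨hT, periodic_exp_smul_of_exp_smul_eq_one hT⟩
end

section
/- Let n ≥ 1, let g = (g₁,…,g_n) ∈ SU(2)^n, fix 1 ≤ j ≤ n, set h = g₁g₂⋯g_j and A = h − h⁻¹. Then for every t ∈ ℝ, the product of the conjugated tuple is unchanged: (exp(tA) g₁ exp(−tA)) · (exp(tA) g₂ exp(−tA)) ⋯ (exp(tA) g_j exp(−tA)) = g₁ g₂ ⋯ g_j. In particular F_j(Φ_jᵗ(g)) = F_j(g) for all t: the quantity F_j is invariant along the bending flow. -/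
open Matrix

/-!
Since `A = h - h⁻¹` commutes with `h`, so does `exp (t • A)`, hence conjugation by `exp (t • A)`
fixes `h`. Conjugation is multiplicative, so the product of the conjugated factors is the
conjugate of their product `h`, which is `h` again.
-/

open NormedSpace

theorem List.prod_map_mul_mul_of_mul_eq_one {α M : Type*} [Monoid M] {u v : M}
    (huv : u * v = 1) (hvu : v * u = 1) (f : α → M) (l : List α) :
    (l.map fun x => u * f x * v).prod = u * (l.map f).prod * v := by
  induction l with
  | nil => simp [huv]
  | cons a l ih =>
    simp only [List.map_cons, List.prod_cons, ih]
    calc u * f a * v * (u * (l.map f).prod * v)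
        = u * f a * (v * u) * (l.map f).prod * v := by simp only [mul_assoc]
      _ = u * (f a * (l.map f).prod) * v := by rw [hvu, mul_one]; simp only [mul_assoc]

section MatrixExp

variable {m 𝔸 : Type*} [Fintype m] [DecidableEq m] [NormedRing 𝔸] [NormedAlgebra ℚ 𝔸]
  [CompleteSpace 𝔸]

theorem Matrix.exp_mul_exp_neg (A : Matrix m m 𝔸) : exp A * exp (-A) = 1 := by
  rw [← Matrix.exp_add_of_commute _ _ (Commute.refl A).neg_right, add_neg_cancel, exp_zero]

theorem Matrix.exp_neg_mul_exp (A : Matrix m m 𝔸) : exp (-A) * exp A = 1 := by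
  simpa only [neg_neg] using Matrix.exp_mul_exp_neg (-A)

theorem Matrix.exp_mul_mul_exp_neg_of_commute {A X : Matrix m m 𝔸} (h : Commute X A) :
    exp A * X * exp (-A) = X := by
  rw [← h.exp_right.eq, mul_assoc, Matrix.exp_mul_exp_neg, mul_one]

end MatrixExp

theorem bending_flow_preserves_product_general (n : ℕ) (g : Fin n → SU2)
    (j : ℕ)
    (h : SU2) (hh : h = ((List.ofFn g).take j).prod)
    (A : Matrix (Fin 2) (Fin 2) ℂ)
    (hA : A = (h : Matrix (Fin 2) (Fin 2) ℂ) - ((h⁻¹ : SU2) : Matrix (Fin 2) (Fin 2) ℂ))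
    (t : ℝ) :
    (((List.ofFn g).take j).map (fun x : SU2 =>
        NormedSpace.exp (t • A) * (x : Matrix (Fin 2) (Fin 2) ℂ)
          * NormedSpace.exp (-(t • A)))).prod
      = (h : Matrix (Fin 2) (Fin 2) ℂ) ∧
    NormedSpace.exp (t • A) * (h : Matrix (Fin 2) (Fin 2) ℂ) * NormedSpace.exp (-(t • A))
      = (h : Matrix (Fin 2) (Fin 2) ℂ) := by
  have hcomm : Commute (h : Matrix (Fin 2) (Fin 2) ℂ) (t • A) := by
    rw [hA]
    exact ((Commute.refl _).sub_right ((Commute.refl h).inv_right.map SU2.subtype)).smul_right t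
  have hfix := Matrix.exp_mul_mul_exp_neg_of_commute hcomm
  refine ⟨?_, hfix⟩
  rw [List.prod_map_mul_mul_of_mul_eq_one (Matrix.exp_mul_exp_neg _) (Matrix.exp_neg_mul_exp _),
    ← Submonoid.coe_list_prod, ← hh, hfix]

/-- The product `g₁⋯g_j` (hence `F_j(g) = h − h⁻¹`) is invariant along the bending flow:
conjugating each of the first `j` entries by `exp(tA)`, `A = h − h⁻¹`, leaves the
product unchanged. -/
theorem bending_flow_preserves_product (n : ℕ) (hn : 1 ≤ n) (g : Fin n → SU2)
    (j : ℕ) (hj1 : 1 ≤ j) (hjn : j ≤ n)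
    (h : SU2) (hh : h = ((List.ofFn g).take j).prod)
    (A : Matrix (Fin 2) (Fin 2) ℂ)
    (hA : A = (h : Matrix (Fin 2) (Fin 2) ℂ) - ((h⁻¹ : SU2) : Matrix (Fin 2) (Fin 2) ℂ))
    (t : ℝ) :
    (((List.ofFn g).take j).map (fun x : SU2 =>
        NormedSpace.exp (t • A) * (x : Matrix (Fin 2) (Fin 2) ℂ)
          * NormedSpace.exp (-(t • A)))).prod
      = (h : Matrix (Fin 2) (Fin 2) ℂ) ∧
    NormedSpace.exp (t • A) * (h : Matrix (Fin 2) (Fin 2) ℂ) * NormedSpace.exp (-(t • A))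
      = (h : Matrix (Fin 2) (Fin 2) ℂ) :=
  bending_flow_preserves_product_general n g j h hh A hA t
end

section
/- Let n ≥ 1 and 1 ≤ i ≤ j ≤ n. Then the bending flows along the nested diagonals commute: for all s, t ∈ ℝ and all g ∈ SU(2)^n, Φ_iˢ(Φ_jᵗ(g)) = Φ_jᵗ(Φ_iˢ(g)). -/
open Matrix

/-- `F_j(m) = (m₁⋯m_j) − (m₁⋯m_j)⁻¹`. -/
noncomputable def Fj (n j : ℕ) (m : Fin n → Matrix (Fin 2) (Fin 2) ℂ) :
    Matrix (Fin 2) (Fin 2) ℂ :=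
  ((List.ofFn m).take j).prod - (((List.ofFn m).take j).prod)⁻¹

/-- The bending flow `Φ_jᵗ`: conjugate the first `j` entries by `exp(t F_j(m))`,
leave the other entries fixed. -/
noncomputable def bendFlow (n j : ℕ) (t : ℝ) (m : Fin n → Matrix (Fin 2) (Fin 2) ℂ) :
    Fin n → Matrix (Fin 2) (Fin 2) ℂ :=
  fun k =>
    if (k : ℕ) < j then
      NormedSpace.exp (t • Fj n j m) * m k * NormedSpace.exp (-(t • Fj n j m))
    else m k

/-! Write `Pᵢ(m)` for the product of the first `i` entries, so `Fᵢ = Pᵢ - Pᵢ⁻¹` and `Φⱼᵗ`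
conjugates the first `j` entries by `B = exp(t Fⱼ)`. For `i ≤ j`, `Φⱼᵗ` conjugates `Pᵢ`, hence
`Fᵢ` and `exp(s Fᵢ)`, by `B`. On the other hand `A = exp(s Fᵢ)` commutes with `Pᵢ`, so `Φᵢˢ` fixes
`Pᵢ`, and since it leaves the later entries alone it fixes `Pⱼ` and `Fⱼ`. Hence both composites
conjugate the first `i` entries by `B A` and the entries with index in `[i, j)` by `B`. -/

theorem List.prod_map_units_conj {M : Type*} [Monoid M] (u : Mˣ) (l : List M) :
    (l.map fun x => (u : M) * x * ↑u⁻¹).prod = u * l.prod * ↑u⁻¹ := by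
  induction l with
  | nil => simp
  | cons x l ih =>
    rw [List.map_cons, List.prod_cons, ih, List.prod_cons]
    simp only [mul_assoc, Units.inv_mul_cancel_left]

theorem List.take_ofFn_congr {α : Type*} {n i : ℕ} {f g : Fin n → α}
    (h : ∀ k : Fin n, (k : ℕ) < i → f k = g k) : (List.ofFn f).take i = (List.ofFn g).take i := by
  apply List.ext_getElem (by simp)
  intro k hk _
  simp only [List.getElem_take, List.getElem_ofFn]
  exact h _ (by simp at hk ⊢; omega)

theorem List.drop_ofFn_congr {α : Type*} {n i : ℕ} {f g : Fin n → α}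
    (h : ∀ k : Fin n, i ≤ (k : ℕ) → f k = g k) : (List.ofFn f).drop i = (List.ofFn g).drop i := by
  apply List.ext_getElem (by simp)
  intro k hk _
  simp only [List.getElem_drop, List.getElem_ofFn]
  exact h _ (by simp)

theorem Matrix.commute_nonsing_inv {n α : Type*} [Fintype n] [DecidableEq n] [CommRing α]
    (A : Matrix n n α) : Commute A A⁻¹ := by
  by_cases hA : IsUnit A.det
  · rw [Commute, SemiconjBy, mul_nonsing_inv A hA, nonsing_inv_mul A hA]
  · rw [nonsing_inv_apply_not_isUnit A hA]
    exact Commute.zero_right A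

theorem Matrix.nonsing_inv_units_conj {n α : Type*} [Fintype n] [DecidableEq n] [CommRing α]
    (u : (Matrix n n α)ˣ) (A : Matrix n n α) :
    (u * A * u⁻¹ : Matrix n n α)⁻¹ = u * A⁻¹ * u⁻¹ := by
  rw [mul_inv_rev, mul_inv_rev, coe_units_inv, nonsing_inv_nonsing_inv, mul_assoc]
  exact (isUnit_iff_isUnit_det _).mp u.isUnit

local notation "M₂" => Matrix (Fin 2) (Fin 2) ℂ

section Bending

variable {n : ℕ}

noncomputable def prefixProd (j : ℕ) (m : Fin n → M₂) : M₂ := ((List.ofFn m).take j).prod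

noncomputable def bendUnit (j : ℕ) (t : ℝ) (m : Fin n → M₂) : M₂ˣ :=
  (Matrix.isUnit_exp (t • Fj n j m)).unit

theorem coe_bendUnit (j : ℕ) (t : ℝ) (m : Fin n → M₂) :
    (bendUnit j t m : M₂) = NormedSpace.exp (t • Fj n j m) :=
  IsUnit.unit_spec _

theorem Fj_eq_prefixProd (j : ℕ) (m : Fin n → M₂) :
    Fj n j m = prefixProd j m - (prefixProd j m)⁻¹ := rfl

theorem bendFlow_apply_of_lt {j : ℕ} {k : Fin n} (hk : (k : ℕ) < j) (t : ℝ) (m : Fin n → M₂) :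
    bendFlow n j t m k = bendUnit j t m * m k * (bendUnit j t m)⁻¹ := by
  rw [bendFlow, if_pos hk, Matrix.coe_units_inv, coe_bendUnit, Matrix.exp_neg]

theorem bendFlow_apply_of_le {j : ℕ} {k : Fin n} (hk : j ≤ (k : ℕ)) (t : ℝ) (m : Fin n → M₂) :
    bendFlow n j t m k = m k := by
  rw [bendFlow, if_neg (not_lt.mpr hk)]

theorem commute_prefixProd_bendUnit (j : ℕ) (t : ℝ) (m : Fin n → M₂) :
    Commute (prefixProd j m) (bendUnit j t m) := by
  rw [coe_bendUnit]
  refine Commute.exp_right (Commute.smul_right ?_ t)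
  exact (Commute.refl _).sub_right (Matrix.commute_nonsing_inv _)

theorem prefixProd_bendFlow_of_le {i j : ℕ} (hij : i ≤ j) (t : ℝ) (m : Fin n → M₂) :
    prefixProd i (bendFlow n j t m) =
      bendUnit j t m * prefixProd i m * (bendUnit j t m)⁻¹ := by
  set u := bendUnit j t m
  have hconj : (List.ofFn (bendFlow n j t m)).take i =
      ((List.ofFn m).take i).map fun x => (u : M₂) * x * u⁻¹ := by
    rw [List.map_take, List.map_ofFn]
    exact List.take_ofFn_congr fun k hk => bendFlow_apply_of_lt (hk.trans_le hij) t m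
  unfold prefixProd
  rw [hconj, List.prod_map_units_conj]

theorem prefixProd_bendFlow_self (i : ℕ) (s : ℝ) (m : Fin n → M₂) :
    prefixProd i (bendFlow n i s m) = prefixProd i m := by
  rw [prefixProd_bendFlow_of_le le_rfl, ← (commute_prefixProd_bendUnit i s m).eq,
    Units.mul_inv_cancel_right]

theorem prefixProd_bendFlow_of_ge {i j : ℕ} (hij : i ≤ j) (s : ℝ) (m : Fin n → M₂) :
    prefixProd j (bendFlow n i s m) = prefixProd j m := by
  obtain ⟨d, rfl⟩ := Nat.exists_eq_add_of_le hij
  have htail : (List.ofFn (bendFlow n i s m)).drop i = (List.ofFn m).drop i :=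
    List.drop_ofFn_congr fun k hk => bendFlow_apply_of_le hk s m
  have hhead := prefixProd_bendFlow_self i s m
  unfold prefixProd at hhead ⊢
  rw [List.take_add, List.take_add, List.prod_append, List.prod_append, hhead, htail]

theorem Fj_bendFlow_of_ge {i j : ℕ} (hij : i ≤ j) (s : ℝ) (m : Fin n → M₂) :
    Fj n j (bendFlow n i s m) = Fj n j m := by
  rw [Fj_eq_prefixProd, Fj_eq_prefixProd, prefixProd_bendFlow_of_ge hij]

theorem bendUnit_bendFlow_of_ge {i j : ℕ} (hij : i ≤ j) (s t : ℝ) (m : Fin n → M₂) :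
    bendUnit j t (bendFlow n i s m) = bendUnit j t m := by
  simp only [bendUnit, Fj_bendFlow_of_ge hij]

theorem Fj_bendFlow_of_le {i j : ℕ} (hij : i ≤ j) (t : ℝ) (m : Fin n → M₂) :
    Fj n i (bendFlow n j t m) = bendUnit j t m * Fj n i m * (bendUnit j t m)⁻¹ := by
  rw [Fj_eq_prefixProd, Fj_eq_prefixProd, prefixProd_bendFlow_of_le hij,
    Matrix.nonsing_inv_units_conj, mul_sub, sub_mul]

theorem bendUnit_bendFlow_of_le {i j : ℕ} (hij : i ≤ j) (s t : ℝ) (m : Fin n → M₂) :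
    bendUnit i s (bendFlow n j t m) = bendUnit j t m * bendUnit i s m * (bendUnit j t m)⁻¹ := by
  ext : 1
  rw [Units.val_mul, Units.val_mul, coe_bendUnit i s, coe_bendUnit i s, Fj_bendFlow_of_le hij,
    ← Matrix.exp_units_conj, mul_smul_comm, smul_mul_assoc]

theorem bendFlow_comm_of_le {i j : ℕ} (hij : i ≤ j) (s t : ℝ) (m : Fin n → M₂) :
    bendFlow n i s (bendFlow n j t m) = bendFlow n j t (bendFlow n i s m) := by
  funext k
  rcases lt_or_ge (k : ℕ) i with hki | hik
  · have hkj : (k : ℕ) < j := hki.trans_le hij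
    rw [bendFlow_apply_of_lt hki, bendFlow_apply_of_lt hkj, bendFlow_apply_of_lt hkj,
      bendFlow_apply_of_lt hki, bendUnit_bendFlow_of_le hij, bendUnit_bendFlow_of_ge hij]
    simp only [_root_.mul_inv_rev, inv_inv, Units.val_mul, mul_assoc, Units.inv_mul_cancel_left]
  rcases lt_or_ge (k : ℕ) j with hkj | hjk
  · rw [bendFlow_apply_of_le hik, bendFlow_apply_of_lt hkj, bendFlow_apply_of_lt hkj,
      bendFlow_apply_of_le hik, bendUnit_bendFlow_of_ge hij]
  · rw [bendFlow_apply_of_le hik, bendFlow_apply_of_le hjk, bendFlow_apply_of_le hjk,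
      bendFlow_apply_of_le hik]

end Bending

theorem bending_flows_commute_general (n : ℕ) (i j : ℕ)
    (hij : i ≤ j) (s t : ℝ) (g : Fin n → SU2) :
    bendFlow n i s (bendFlow n j t (fun k => (g k : Matrix (Fin 2) (Fin 2) ℂ)))
      = bendFlow n j t (bendFlow n i s (fun k => (g k : Matrix (Fin 2) (Fin 2) ℂ))) :=
  bendFlow_comm_of_le hij s t _

/-- Bending flows along nested diagonals commute: `Φ_iˢ ∘ Φ_jᵗ = Φ_jᵗ ∘ Φ_iˢ` for `i ≤ j`. -/
theorem bending_flows_commute (n : ℕ) (hn : 1 ≤ n) (i j : ℕ)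
    (hi : 1 ≤ i) (hij : i ≤ j) (hjn : j ≤ n) (s t : ℝ) (g : Fin n → SU2) :
    bendFlow n i s (bendFlow n j t (fun k => (g k : Matrix (Fin 2) (Fin 2) ℂ)))
      = bendFlow n j t (bendFlow n i s (fun k => (g k : Matrix (Fin 2) (Fin 2) ℂ))) :=
  bending_flows_commute_general n i j hij s t g
end

section
/- Let G = SU(2), n ≥ 2, and for 1 ≤ m ≤ n−1 define R_m, R'_m : G^n → G^n by (R_m(g))_m = g_m g_{m+1} g_m⁻¹, (R_m(g))_{m+1} = g_m, (R'_m(g))_m = g_{m+1}, (R'_m(g))_{m+1} = g_{m+1}⁻¹ g_m g_{m+1}, both fixing all other coordinates. For 1 ≤ i < j ≤ n set A_{ij} = R_{j−1} ∘ ⋯ ∘ R_{i+1} ∘ R_i ∘ R_i ∘ R'_{i+1} ∘ ⋯ ∘ R'_{j−1}. Then for every g ∈ G^n, writing h = g_i g_j and w = h g_j h⁻¹ g_j⁻¹: (A_{ij}(g))_k = g_k for k < i or k > j; (A_{ij}(g))_k = h g_k h⁻¹ for k = i and k = j; and (A_{ij}(g))_k = w g_k w⁻¹ for i < k < j. -/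
open Matrix

/-- The braid move `R_m` (1-indexed, `1 ≤ m ≤ n−1`): replace the pair at positions
`(m, m+1)` by `(g_m g_{m+1} g_m⁻¹, g_m)`, fixing all other coordinates. -/
noncomputable def Rbraid (n m : ℕ) (g : Fin n → SU2) : Fin n → SU2 := fun k =>
  if hm : 1 ≤ m ∧ m + 1 ≤ n then
    if (k : ℕ) + 1 = m then g k * g ⟨m, by omega⟩ * (g k)⁻¹
    else if (k : ℕ) = m then g ⟨m - 1, by omega⟩
    else g k
  else g k

/-- The inverse braid move `R'_m`: replace the pair at positions `(m, m+1)` by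
`(g_{m+1}, g_{m+1}⁻¹ g_m g_{m+1})`, fixing all other coordinates. -/
noncomputable def Rbraid' (n m : ℕ) (g : Fin n → SU2) : Fin n → SU2 := fun k =>
  if hm : 1 ≤ m ∧ m + 1 ≤ n then
    if (k : ℕ) + 1 = m then g ⟨m, by omega⟩
    else if (k : ℕ) = m then (g k)⁻¹ * g ⟨m - 1, by omega⟩ * g k
    else g k
  else g k

/-- The pure braid generator
`A_{ij} = R_{j−1} ∘ ⋯ ∘ R_{i+1} ∘ R_i ∘ R_i ∘ R'_{i+1} ∘ ⋯ ∘ R'_{j−1}`. -/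
noncomputable def Aij (n i j : ℕ) : (Fin n → SU2) → (Fin n → SU2) :=
  (((List.range' (i + 1) (j - 1 - i)).reverse.map (Rbraid n))
      ++ [Rbraid n i, Rbraid n i]
      ++ ((List.range' (i + 1) (j - 1 - i)).map (Rbraid' n))).foldr (· ∘ ·) id

/-!
Induction on `j`. Since `A_{i,j+1} = R_j ∘ A_{ij} ∘ R'_j` and `R'_j` moves `g_{j+1}` into slot `j`,
the elements `h = g_i g_{j+1}` and `w = h g_{j+1} h⁻¹ g_{j+1}⁻¹` attached to `(i, j+1)` and `g` are
the ones attached to `(i, j)` and `R'_j g`. After `A_{ij}`, slots `j, j+1` hold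
`h g_{j+1} h⁻¹, g_{j+1}⁻¹ g_j g_{j+1}`, which `R_j` turns into `w g_j w⁻¹, h g_{j+1} h⁻¹`.
The base case is `A_{i,i+1} = R_i ∘ R_i`.
-/

theorem List.foldr_comp_eq_comp {α : Type*} (l : List (α → α)) (f : α → α) :
    l.foldr (· ∘ ·) f = l.foldr (· ∘ ·) id ∘ f := by
  induction l with
  | nil => rfl
  | cons a l ih => simp only [List.foldr_cons, ih]; rfl

section

variable {n : ℕ}

theorem Rbraid_apply_of_ne {m : ℕ} (g : Fin n → SU2) {k : Fin n} (hk₁ : (k : ℕ) + 1 ≠ m)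
    (hk₂ : (k : ℕ) ≠ m) : Rbraid n m g k = g k := by
  unfold Rbraid
  split_ifs <;> rfl

theorem Rbraid_apply_left {m : ℕ} (hm : 1 ≤ m) (hmn : m + 1 ≤ n) (g : Fin n → SU2) :
    Rbraid n m g ⟨m - 1, by omega⟩ =
      g ⟨m - 1, by omega⟩ * g ⟨m, by omega⟩ * (g ⟨m - 1, by omega⟩)⁻¹ := by
  simp only [Rbraid, dif_pos (And.intro hm hmn), if_pos (Nat.sub_add_cancel hm)]

theorem Rbraid_apply_right {m : ℕ} (hm : 1 ≤ m) (hmn : m + 1 ≤ n) (g : Fin n → SU2) :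
    Rbraid n m g ⟨m, by omega⟩ = g ⟨m - 1, by omega⟩ := by
  simp only [Rbraid, dif_pos (And.intro hm hmn), if_neg (Nat.succ_ne_self m), if_true]

theorem Rbraid'_apply_of_ne {m : ℕ} (g : Fin n → SU2) {k : Fin n} (hk₁ : (k : ℕ) + 1 ≠ m)
    (hk₂ : (k : ℕ) ≠ m) : Rbraid' n m g k = g k := by
  unfold Rbraid'
  split_ifs <;> rfl

theorem Rbraid'_apply_left {m : ℕ} (hm : 1 ≤ m) (hmn : m + 1 ≤ n) (g : Fin n → SU2) :
    Rbraid' n m g ⟨m - 1, by omega⟩ = g ⟨m, by omega⟩ := by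
  simp only [Rbraid', dif_pos (And.intro hm hmn), if_pos (Nat.sub_add_cancel hm)]

theorem Rbraid'_apply_right {m : ℕ} (hm : 1 ≤ m) (hmn : m + 1 ≤ n) (g : Fin n → SU2) :
    Rbraid' n m g ⟨m, by omega⟩ = (g ⟨m, by omega⟩)⁻¹ * g ⟨m - 1, by omega⟩ * g ⟨m, by omega⟩ := by
  simp only [Rbraid', dif_pos (And.intro hm hmn), if_neg (Nat.succ_ne_self m), if_true]

theorem Aij_succ_self (i : ℕ) : Aij n i (i + 1) = Rbraid n i ∘ Rbraid n i := by
  simp [Aij]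

theorem Aij_succ {i j : ℕ} (hij : i < j) :
    Aij n i (j + 1) = Rbraid n j ∘ Aij n i j ∘ Rbraid' n j := by
  have hlen : j + 1 - 1 - i = j - 1 - i + 1 := by omega
  have hlast : i + 1 + (j - 1 - i) = j := by omega
  rw [Aij, Aij, hlen, List.range'_1_concat, hlast]
  simp only [List.map_append, List.reverse_append, List.foldr_append, List.map_cons, List.map_nil,
    List.reverse_cons, List.reverse_nil, List.nil_append, List.foldr_cons, List.foldr_nil,
    Function.comp_id]
  rw [List.foldr_comp_eq_comp _ (Rbraid' n j), List.foldr_comp_eq_comp _ (Rbraid n i ∘ _)]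
  conv_rhs => rw [List.foldr_comp_eq_comp _ (Rbraid n i ∘ _)]
  rfl

def conjEndsInterior {G : Type*} [Group G] (i j : ℕ) (h w : G) (g : Fin n → G) : Fin n → G :=
  fun k =>
    if (k : ℕ) + 1 < i ∨ j < (k : ℕ) + 1 then g k
    else if (k : ℕ) + 1 = i ∨ (k : ℕ) + 1 = j then h * g k * h⁻¹
    else w * g k * w⁻¹

section conjEndsInterior

variable {G : Type*} [Group G] {i j : ℕ} (h w : G) (g : Fin n → G) {k : ℕ} (hk : k < n)
include hk

theorem conjEndsInterior_apply_of_outside (hout : k + 1 < i ∨ j < k + 1) :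
    conjEndsInterior i j h w g ⟨k, hk⟩ = g ⟨k, hk⟩ :=
  if_pos hout

theorem conjEndsInterior_apply_of_end (hij : i ≤ j) (hend : k + 1 = i ∨ k + 1 = j) :
    conjEndsInterior i j h w g ⟨k, hk⟩ = h * g ⟨k, hk⟩ * h⁻¹ := by
  dsimp only [conjEndsInterior]
  rw [if_neg (by omega), if_pos hend]

theorem conjEndsInterior_apply_of_interior (hint : i < k + 1 ∧ k + 1 < j) :
    conjEndsInterior i j h w g ⟨k, hk⟩ = w * g ⟨k, hk⟩ * w⁻¹ := by
  dsimp only [conjEndsInterior]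
  rw [if_neg (by omega), if_neg (by omega)]

end conjEndsInterior

theorem Rbraid_Rbraid_eq_conjEndsInterior {i : ℕ} (hi : 1 ≤ i) (hin : i + 1 ≤ n)
    (g : Fin n → SU2) (w : SU2) :
    Rbraid n i (Rbraid n i g) =
      conjEndsInterior i (i + 1) (g ⟨i - 1, by omega⟩ * g ⟨i, hin⟩) w g := by
  funext ⟨k, hk⟩
  by_cases hleft : k + 1 = i
  · obtain rfl : k = i - 1 := by omega
    rw [Rbraid_apply_left hi hin, Rbraid_apply_left hi hin, Rbraid_apply_right hi hin,
      conjEndsInterior_apply_of_end _ _ _ _ (by omega) (by omega)]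
    group
  by_cases hright : k = i
  · obtain rfl : i = k := hright.symm
    rw [Rbraid_apply_right hi hin, Rbraid_apply_left hi hin,
      conjEndsInterior_apply_of_end _ _ _ _ (by omega) (by omega)]
    group
  rw [Rbraid_apply_of_ne _ hleft hright, Rbraid_apply_of_ne _ hleft hright,
    conjEndsInterior_apply_of_outside _ _ _ _ (by omega)]

theorem Rbraid_conjEndsInterior_Rbraid' {i j : ℕ} (hij : i < j) (hjn : j + 1 ≤ n)
    (g : Fin n → SU2) (h w : SU2) (hw : w = h * g ⟨j, hjn⟩ * h⁻¹ * (g ⟨j, hjn⟩)⁻¹) :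
    Rbraid n j (conjEndsInterior i j h w (Rbraid' n j g)) = conjEndsInterior i (j + 1) h w g := by
  have hj : 1 ≤ j := by omega
  funext ⟨k, hk⟩
  by_cases hleft : k + 1 = j
  · obtain rfl : k = j - 1 := by omega
    rw [Rbraid_apply_left hj hjn, conjEndsInterior_apply_of_end _ _ _ _ hij.le (by omega),
      conjEndsInterior_apply_of_outside _ _ _ _ (by omega),
      conjEndsInterior_apply_of_interior _ _ _ _ (by omega), Rbraid'_apply_left hj hjn,
      Rbraid'_apply_right hj hjn, hw]
    group
  by_cases hright : k = j
  · obtain rfl : j = k := hright.symm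
    rw [Rbraid_apply_right hj hjn, conjEndsInterior_apply_of_end _ _ _ _ hij.le (by omega),
      Rbraid'_apply_left hj hjn, conjEndsInterior_apply_of_end _ _ _ _ (by omega) (by omega)]
  rw [Rbraid_apply_of_ne _ hleft hright]
  simp only [conjEndsInterior, Rbraid'_apply_of_ne (k := ⟨k, hk⟩) g hleft hright]
  split_ifs <;> first | rfl | omega

theorem Aij_eq_conjEndsInterior {i j : ℕ} (hij : i < j) (hi : 1 ≤ i) (hjn : j ≤ n)
    {g : Fin n → SU2} {h w : SU2} (hh : h = g ⟨i - 1, by omega⟩ * g ⟨j - 1, by omega⟩)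
    (hw : w = h * g ⟨j - 1, by omega⟩ * h⁻¹ * (g ⟨j - 1, by omega⟩)⁻¹) :
    Aij n i j g = conjEndsInterior i j h w g := by
  induction j, hij using Nat.le_induction generalizing g h w with
  | base =>
    rw [Aij_succ_self, Function.comp_apply, hh]
    exact Rbraid_Rbraid_eq_conjEndsInterior hi hjn g w
  | succ j hij ih =>
    have hj : 1 ≤ j := by omega
    have hg'i : Rbraid' n j g ⟨i - 1, by omega⟩ = g ⟨i - 1, by omega⟩ :=
      Rbraid'_apply_of_ne g (by dsimp only; omega) (by dsimp only; omega)
    have hg'j : Rbraid' n j g ⟨j - 1, by omega⟩ = g ⟨j, hjn⟩ := Rbraid'_apply_left hj hjn g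
    rw [Aij_succ hij, Function.comp_apply, Function.comp_apply,
      ih (by omega) (g := Rbraid' n j g) (h := h) (w := w) (by rw [hg'i, hg'j, hh]; rfl) (by rw [hg'j, hw]; rfl),
      Rbraid_conjEndsInterior_Rbraid' hij hjn g h w hw]

end

/-- Explicit formula for `A_{ij}`: with `h = g_i g_j` and `w = h g_j h⁻¹ g_j⁻¹`,
the coordinates `i` and `j` are conjugated by `h`, the intermediate ones by `w`,
and the others are fixed. -/
theorem Aij_explicit (n : ℕ) (i j : ℕ) (hi : 1 ≤ i) (hij : i < j) (hj : j ≤ n)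
    (g : Fin n → SU2) (h w : SU2)
    (hh : h = g ⟨i - 1, by omega⟩ * g ⟨j - 1, by omega⟩)
    (hw : w = h * g ⟨j - 1, by omega⟩ * h⁻¹ * (g ⟨j - 1, by omega⟩)⁻¹) :
    ∀ k : Fin n,
      (((k : ℕ) + 1 < i ∨ j < (k : ℕ) + 1) → Aij n i j g k = g k) ∧
      (((k : ℕ) + 1 = i ∨ (k : ℕ) + 1 = j) → Aij n i j g k = h * g k * h⁻¹) ∧
      ((i < (k : ℕ) + 1 ∧ (k : ℕ) + 1 < j) → Aij n i j g k = w * g k * w⁻¹) := by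
  rintro ⟨k, hk⟩
  rw [Aij_eq_conjEndsInterior hij hi hj hh hw]
  exact ⟨conjEndsInterior_apply_of_outside h w g hk, conjEndsInterior_apply_of_end h w g hk hij.le,
    conjEndsInterior_apply_of_interior h w g hk⟩
end

section
/- Let g_i, g_j ∈ SU(2) with h = g_i g_j satisfying h ≠ 1 and h ≠ −1; write the (real) trace of h as tr h = 2 cos θ with θ ∈ (0, π), set F = h − h⁻¹ and t₀ = θ / √(4 − (tr h)²). Then exp(t₀ • F) = h, and consequently conjugation of any matrix by exp(t₀ F) coincides with conjugation by g_i g_j: for every x ∈ M₂(ℂ), exp(t₀F) x exp(t₀F)⁻¹ = (g_ig_j) x (g_ig_j)⁻¹. -/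
/-!
For `h ∈ SU(2)` the inverse is the adjugate `tr h • 1 - h`, so `F = h - h⁻¹ = 2h - tr h • 1`, and
Cayley–Hamilton gives `F² = (tr h² - 4) • 1 = -4 sin² θ • 1`. Hence `A = t₀ • F`, with
`t₀ = θ / (2 sin θ)`, squares to `-θ² • 1`; splitting the exponential series into even and odd
powers gives `exp A = cos θ • 1 + (sin θ / θ) • A = cos θ • 1 + (h - cos θ • 1) = h`.
-/

open Matrix

section

open Real NormedSpace

theorem exp_eq_cos_smul_one_add_sin_div_smul {𝔸 : Type*} [Ring 𝔸] [Algebra ℝ 𝔸]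
    [TopologicalSpace 𝔸] [IsTopologicalRing 𝔸] [ContinuousSMul ℝ 𝔸] [T2Space 𝔸]
    {A : 𝔸} {θ : ℝ} (hθ : θ ≠ 0) (hA : A ^ 2 = -(θ ^ 2) • (1 : 𝔸)) :
    exp A = cos θ • (1 : 𝔸) + (sin θ / θ) • A := by
  have hpow (n : ℕ) : A ^ (2 * n) = ((-1) ^ n * θ ^ (2 * n)) • (1 : 𝔸) := by
    rw [pow_mul, hA, smul_pow, one_pow, neg_pow, pow_mul]
  rw [exp_eq_tsum ℝ]
  refine HasSum.tsum_eq (HasSum.even_add_odd ?_ ?_)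
  · convert (hasSum_cos θ).smul_const (1 : 𝔸) using 2 with n
    rw [hpow, smul_smul]
    ring_nf
  · convert ((hasSum_sin θ).div_const θ).smul_const A using 2 with n
    rw [pow_succ, hpow, smul_mul_assoc, one_mul, smul_smul]
    congr 1
    field_simp
    ring

theorem Matrix.adjugate_fin_two_eq_trace_smul_one_sub {R : Type*} [CommRing R]
    (m : Matrix (Fin 2) (Fin 2) R) :
    adjugate m = m.trace • (1 : Matrix (Fin 2) (Fin 2) R) - m := by
  ext i j
  fin_cases i <;> fin_cases j <;> simp [adjugate_fin_two, trace_fin_two]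

theorem Matrix.sub_adjugate_sq_fin_two {R : Type*} [CommRing R] (m : Matrix (Fin 2) (Fin 2) R) :
    (m - adjugate m) ^ 2 = (m.trace ^ 2 - 4 * m.det) • (1 : Matrix (Fin 2) (Fin 2) R) := by
  ext i j
  fin_cases i <;> fin_cases j <;>
    simp [sq, adjugate_fin_two, trace_fin_two, det_fin_two, mul_apply, Fin.sum_univ_two] <;> ring

theorem SU2.coe_inv_eq_adjugate (u : SU2) :
    ((u⁻¹ : SU2) : Matrix (Fin 2) (Fin 2) ℂ) = adjugate (u : Matrix (Fin 2) (Fin 2) ℂ) := by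
  obtain ⟨hu, hdet⟩ := mem_specialUnitaryGroup_iff.mp u.2
  calc ((u⁻¹ : SU2) : Matrix (Fin 2) (Fin 2) ℂ)
        = star (u : Matrix (Fin 2) (Fin 2) ℂ) * (u * adjugate (u : Matrix (Fin 2) (Fin 2) ℂ)) := by
          rw [mul_adjugate, hdet, one_smul, mul_one]; rfl
    _ = adjugate (u : Matrix (Fin 2) (Fin 2) ℂ) := by
          rw [← mul_assoc, Unitary.star_mul_self_of_mem hu, one_mul]

theorem sqrt_four_sub_two_mul_cos_sq {θ : ℝ} (h0 : 0 ≤ θ) (hπ : θ ≤ π) :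
    √(4 - (2 * cos θ) ^ 2) = 2 * sin θ := by
  rw [sin_eq_sqrt_one_sub_cos_sq h0 hπ,
    show 4 - (2 * cos θ) ^ 2 = 2 ^ 2 * (1 - cos θ ^ 2) by ring,
    sqrt_mul' _ (by nlinarith [cos_sq_le_one θ]), sqrt_sq zero_le_two]

theorem exp_smul_sub_adjugate_eq_self {m : Matrix (Fin 2) (Fin 2) ℂ} (hdet : m.det = 1)
    {θ : ℝ} (hθ : θ ∈ Set.Ioo 0 π) (htr : m.trace = (2 * cos θ : ℝ)) :
    exp ((θ / (2 * sin θ)) • (m - adjugate m)) = m := by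
  have hθ0 : θ ≠ 0 := hθ.1.ne'
  have hsin : 0 < sin θ := sin_pos_of_pos_of_lt_pi hθ.1 hθ.2
  have hdisc : (2 * cos θ) ^ 2 - 4 = -(4 * sin θ ^ 2) := by
    linear_combination 4 * sin_sq_add_cos_sq θ
  have hsq : ((θ / (2 * sin θ)) • (m - adjugate m)) ^ 2
      = -(θ ^ 2) • (1 : Matrix (Fin 2) (Fin 2) ℂ) := by
    rw [smul_pow, sub_adjugate_sq_fin_two, htr, hdet, mul_one, ← Complex.ofReal_pow,
      ← Complex.ofReal_ofNat 4, ← Complex.ofReal_sub, hdisc, Complex.coe_smul, smul_smul]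
    congr 1
    field_simp
    norm_num
  rw [exp_eq_cos_smul_one_add_sin_div_smul hθ0 hsq, smul_smul,
    show sin θ / θ * (θ / (2 * sin θ)) = 1 / 2 by field_simp,
    adjugate_fin_two_eq_trace_smul_one_sub, htr, ← Complex.coe_smul, ← Complex.coe_smul]
  push_cast
  module

end

theorem exp_time_t0_eq_conj_general (gi gj : SU2) (h : SU2) (hh : h = gi * gj)
    (θ : ℝ) (hθ : θ ∈ Set.Ioo 0 Real.pi)
    (htr : ((h : Matrix (Fin 2) (Fin 2) ℂ)).trace = ((2 * Real.cos θ : ℝ) : ℂ))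
    (t₀ : ℝ) (ht₀ : t₀ = θ / Real.sqrt (4 - (2 * Real.cos θ) ^ 2))
    (F : Matrix (Fin 2) (Fin 2) ℂ)
    (hF : F = (h : Matrix (Fin 2) (Fin 2) ℂ) - ((h⁻¹ : SU2) : Matrix (Fin 2) (Fin 2) ℂ)) :
    NormedSpace.exp (t₀ • F) = (h : Matrix (Fin 2) (Fin 2) ℂ) ∧
    (∀ x : Matrix (Fin 2) (Fin 2) ℂ,
      NormedSpace.exp (t₀ • F) * x * (NormedSpace.exp (t₀ • F))⁻¹
        = ((gi * gj : SU2) : Matrix (Fin 2) (Fin 2) ℂ) * x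
            * (((gi * gj : SU2) : Matrix (Fin 2) (Fin 2) ℂ))⁻¹) := by
  have hexp : NormedSpace.exp (t₀ • F) = h := by
    rw [ht₀, sqrt_four_sub_two_mul_cos_sq hθ.1.le hθ.2.le, hF, SU2.coe_inv_eq_adjugate]
    exact exp_smul_sub_adjugate_eq_self (mem_specialUnitaryGroup_iff.mp h.2).2 hθ htr
  exact ⟨hexp, fun x => by rw [hexp, hh]⟩

/-- At time `t₀ = θ/√(4 − (tr h)²)`, the bending flow's conjugating element
`exp(t₀ F)`, `F = h − h⁻¹`, equals `h = g_i g_j`; hence conjugation by `exp(t₀F)`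
coincides with conjugation by `g_i g_j`. -/
theorem exp_time_t0_eq_conj (gi gj : SU2) (h : SU2) (hh : h = gi * gj)
    (h1 : (h : Matrix (Fin 2) (Fin 2) ℂ) ≠ 1)
    (hm1 : (h : Matrix (Fin 2) (Fin 2) ℂ) ≠ -1)
    (θ : ℝ) (hθ : θ ∈ Set.Ioo 0 Real.pi)
    (htr : ((h : Matrix (Fin 2) (Fin 2) ℂ)).trace = ((2 * Real.cos θ : ℝ) : ℂ))
    (t₀ : ℝ) (ht₀ : t₀ = θ / Real.sqrt (4 - (2 * Real.cos θ) ^ 2))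
    (F : Matrix (Fin 2) (Fin 2) ℂ)
    (hF : F = (h : Matrix (Fin 2) (Fin 2) ℂ) - ((h⁻¹ : SU2) : Matrix (Fin 2) (Fin 2) ℂ)) :
    NormedSpace.exp (t₀ • F) = (h : Matrix (Fin 2) (Fin 2) ℂ) ∧
    (∀ x : Matrix (Fin 2) (Fin 2) ℂ,
      NormedSpace.exp (t₀ • F) * x * (NormedSpace.exp (t₀ • F))⁻¹
        = ((gi * gj : SU2) : Matrix (Fin 2) (Fin 2) ℂ) * x
            * (((gi * gj : SU2) : Matrix (Fin 2) (Fin 2) ℂ))⁻¹) :=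
  exp_time_t0_eq_conj_general gi gj h hh θ hθ htr t₀ ht₀ F hF
end
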